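/- arXiv:1401.6535 — 7 statements merged into one kernel-verified Lean document; each statement's English description precedes it below -/
import Mathlib

section
/- If (X, <) is an infinite linear order and r is a positive integer, then there exists Y ⊆ X with |Y| = |X| such that for all y1 < y2 in Y there exist at least r elements of X below y1, at least r elements of X strictly between y1 and y2, and at least r elements of X above y2. -/
open Set

def Good {X : Type} (r : ℕ) (S : Set X) : Prop :=
  ∃ s : Finset X, r ≤ s.card ∧ ↑s ⊆ S

lemma good_of_infinite {X : Type} {r : ℕ} {S : Set X} (h : S.Infinite) : Good r S := by
  obtain ⟨t, ht, hc⟩ := h.exists_subset_card_eq r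
  exact ⟨t, hc.ge, ht⟩

-- key smallness lemma
lemma small {X : Type} [LinearOrder X] {r : ℕ} (S : X → Set X) (K : Set X)
    (hK : ∀ x ∈ K, ¬ Good r (S x)) (hS : ∀ x ∈ K, ∀ x' ∈ K, x' < x → x' ∈ S x) :
    K.Finite := by
  have key : ∀ s : Finset X, ↑s ⊆ K → s.card ≤ r := by
    intro s hs
    by_contra hcard
    push_neg at hcard
    have hne : s.Nonempty := Finset.card_pos.mp (by omega)
    set x := s.max' hne with hx
    have hxK : x ∈ K := hs (s.max'_mem hne)
    apply hK x hxK
    refine ⟨s.erase x, by rw [Finset.card_erase_of_mem (s.max'_mem hne)]; omega, ?_⟩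
    intro x' hx'
    simp only [Finset.coe_erase, Set.mem_diff, Finset.mem_coe, Set.mem_singleton_iff] at hx'
    have h1 : x' ∈ K := hs hx'.1
    have h2 : x' < x := lt_of_le_of_ne (s.le_max' x' hx'.1) hx'.2
    exact hS x hxK x' h1 h2
  by_contra hinf
  obtain ⟨t, ht, hc⟩ := (show K.Infinite from hinf).exists_subset_card_eq (r + 1)
  have := key t ht
  omega

lemma small' {X : Type} [LinearOrder X] {r : ℕ} (S : X → Set X) (K : Set X)
    (hK : ∀ x ∈ K, ¬ Good r (S x)) (hS : ∀ x ∈ K, ∀ x' ∈ K, x < x' → x' ∈ S x) :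
    K.Finite := by
  have key : ∀ s : Finset X, ↑s ⊆ K → s.card ≤ r := by
    intro s hs
    by_contra hcard
    push_neg at hcard
    have hne : s.Nonempty := Finset.card_pos.mp (by omega)
    set x := s.min' hne with hx
    have hxK : x ∈ K := hs (s.min'_mem hne)
    apply hK x hxK
    refine ⟨s.erase x, by rw [Finset.card_erase_of_mem (s.min'_mem hne)]; omega, ?_⟩
    intro x' hx'
    simp only [Finset.coe_erase, Set.mem_diff, Finset.mem_coe, Set.mem_singleton_iff] at hx'
    have h1 : x' ∈ K := hs hx'.1
    have h2 : x < x' := lt_of_le_of_ne (s.min'_le x' hx'.1) (Ne.symm hx'.2)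
    exact hS x hxK x' h1 h2
  by_contra hinf
  obtain ⟨t, ht, hc⟩ := (show K.Infinite from hinf).exists_subset_card_eq (r + 1)
  have := key t ht
  omega

/-- If `(X, <)` is an infinite linear order and `r` a positive integer, then there is
`Y ⊆ X` with `|Y| = |X|` such that for all `y1 < y2` in `Y` there are at least `r`
elements of `X` below `y1`, at least `r` strictly between `y1` and `y2`, and at least
`r` above `y2`. -/
theorem stmt2 (X : Type) [LinearOrder X] [Infinite X] (r : ℕ) (hr : 0 < r) :
    ∃ Y : Set X, Cardinal.mk Y = Cardinal.mk X ∧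
      ∀ y1 ∈ Y, ∀ y2 ∈ Y, y1 < y2 →
        (∃ s : Finset X, r ≤ s.card ∧ ∀ x ∈ s, x < y1) ∧
        (∃ s : Finset X, r ≤ s.card ∧ ∀ x ∈ s, y1 < x ∧ x < y2) ∧
        (∃ s : Finset X, r ≤ s.card ∧ ∀ x ∈ s, y2 < x) := by
  classical
  set P : Set (Set X) := {Y | (∀ y ∈ Y, Good r (Set.Iio y) ∧ Good r (Set.Ioi y)) ∧
      ∀ a ∈ Y, ∀ b ∈ Y, a < b → Good r (Set.Ioo a b)} with hP
  obtain ⟨M, hM⟩ : ∃ M, Maximal (· ∈ P) M := by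
    apply zorn_subset
    intro c hcP hchain
    refine ⟨⋃₀ c, ⟨?_, ?_⟩, fun s hs => subset_sUnion_of_mem hs⟩
    · rintro y ⟨t, htc, hyt⟩
      exact (hcP htc).1 y hyt
    · rintro a ⟨t, htc, hat⟩ b ⟨u, huc, hbu⟩ hab
      rcases hchain.total htc huc with h | h
      · exact (hcP huc).2 a (h hat) b hbu hab
      · exact (hcP htc).2 a hat b (h hbu) hab
  have hMP : M ∈ P := hM.1
  set B : Set X := {x | ¬ Good r (Set.Iio x)} with hB
  set T : Set X := {x | ¬ Good r (Set.Ioi x)} with hT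
  set Km : X → Set X := fun y => {x | x < y ∧ ¬ Good r (Set.Ioo x y)} with hKm
  set Kp : X → Set X := fun y => {x | y < x ∧ ¬ Good r (Set.Ioo y x)} with hKp
  have hBfin : B.Finite := small (r := r) (fun x => Set.Iio x) B (fun x hx => hx)
    (fun x _ x' _ h => h)
  have hTfin : T.Finite := small' (r := r) (fun x => Set.Ioi x) T (fun x hx => hx)
    (fun x _ x' _ h => h)
  have hKmfin : ∀ y, (Km y).Finite := fun y =>
    small' (r := r) (fun x => Set.Ioo x y) (Km y) (fun x hx => hx.2)
      (fun x hx x' hx' h => ⟨h, hx'.1⟩)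
  have hKpfin : ∀ y, (Kp y).Finite := fun y =>
    small (r := r) (fun x => Set.Ioo y x) (Kp y) (fun x hx => hx.2)
      (fun x hx x' hx' h => ⟨hx'.1, h⟩)
  -- covering
  have hcover : (Set.univ : Set X) ⊆ B ∪ T ∪ M ∪ ⋃ y ∈ M, (Km y ∪ Kp y) := by
    intro x _
    by_contra hx
    simp only [Set.mem_union, Set.mem_iUnion, not_or, not_exists] at hx
    obtain ⟨⟨⟨hxB, hxT⟩, hxM⟩, hxK⟩ := hx
    have hins : insert x M ∈ P := by
      constructor
      · rintro y (rfl | hy)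
        · exact ⟨not_not.mp hxB, not_not.mp hxT⟩
        · exact hMP.1 y hy
      · rintro a (rfl | ha) b (rfl | hb) hab
        · exact absurd hab (lt_irrefl _)
        · by_contra hg
          exact (hxK b hb).1 ⟨hab, hg⟩
        · by_contra hg
          exact (hxK a ha).2 ⟨hab, hg⟩
        · exact hMP.2 a ha b hb hab
    exact hxM (hM.2 hins (Set.subset_insert x M) (Set.mem_insert x M))
  refine ⟨M, ?_, ?_⟩
  · -- cardinality
    have hMinf : M.Infinite := by
      by_contra hfin
      rw [Set.not_infinite] at hfin
      have : (Set.univ : Set X).Finite :=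
        Set.Finite.subset (((hBfin.union hTfin).union hfin).union
          (Set.Finite.biUnion hfin (fun y _ => (hKmfin y).union (hKpfin y)))) hcover
      exact Set.infinite_univ this
    have : Infinite ↥M := hMinf.to_subtype
    have ha : Cardinal.aleph0 ≤ Cardinal.mk ↥M := Cardinal.aleph0_le_mk ↥M
    have hNE : Nonempty ↥M := hMinf.nonempty.to_subtype
    have hU : Cardinal.mk ↥(⋃ y ∈ M, (Km y ∪ Kp y)) ≤ Cardinal.mk ↥M := by
      refine le_trans (Cardinal.mk_biUnion_le _ M) ?_
      have hsup : (⨆ y : ↥M, Cardinal.mk ↥(Km y.1 ∪ Kp y.1)) ≤ Cardinal.aleph0 :=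
        ciSup_le fun y => (((hKmfin y.1).union (hKpfin y.1)).lt_aleph0).le
      calc Cardinal.mk ↥M * (⨆ y : ↥M, Cardinal.mk ↥(Km y.1 ∪ Kp y.1))
          ≤ Cardinal.mk ↥M * Cardinal.mk ↥M := by
            exact mul_le_mul' le_rfl (hsup.trans ha)
        _ = Cardinal.mk ↥M := Cardinal.mul_eq_self ha
    refine le_antisymm (Cardinal.mk_set_le M) ?_
    calc Cardinal.mk X
        = Cardinal.mk ↥(Set.univ : Set X) := Cardinal.mk_univ.symm
      _ ≤ Cardinal.mk ↥(B ∪ T ∪ M ∪ ⋃ y ∈ M, (Km y ∪ Kp y)) :=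
          Cardinal.mk_le_mk_of_subset hcover
      _ ≤ Cardinal.mk ↥(B ∪ T ∪ M) + Cardinal.mk ↥(⋃ y ∈ M, (Km y ∪ Kp y)) :=
          Cardinal.mk_union_le _ _
      _ ≤ (Cardinal.mk ↥(B ∪ T) + Cardinal.mk ↥M) + Cardinal.mk ↥M :=
          add_le_add (Cardinal.mk_union_le _ _) hU
      _ ≤ (Cardinal.mk ↥M + Cardinal.mk ↥M) + Cardinal.mk ↥M :=
          add_le_add (add_le_add (((hBfin.union hTfin).lt_aleph0.le).trans ha) le_rfl) le_rfl
      _ = Cardinal.mk ↥M := by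
          rw [Cardinal.add_eq_self ha, Cardinal.add_eq_self ha]
  · intro y1 hy1 y2 hy2 h12
    obtain ⟨s1, hc1, hs1⟩ := (hMP.1 y1 hy1).1
    obtain ⟨s2, hc2, hs2⟩ := hMP.2 y1 hy1 y2 hy2 h12
    obtain ⟨s3, hc3, hs3⟩ := (hMP.1 y2 hy2).2
    exact ⟨⟨s1, hc1, fun x hx => hs1 hx⟩, ⟨s2, hc2, fun x hx => hs2 hx⟩,
      ⟨s3, hc3, fun x hx => hs3 hx⟩⟩
end

section
/- For any infinite cardinal κ and any natural number r, the partition relation beth_r(κ)^+ → (κ^+)^{r+1}_κ holds: every coloring of the (r+1)-element subsets of a set of size beth_r(κ)^+ in κ colors admits a homogeneous set of size κ^+. -/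
open Cardinal

/-- `iterBeth κ r` is the `r`-fold iterated power-set cardinal starting at `κ`:
`iterBeth κ 0 = κ` and `iterBeth κ (n+1) = 2 ^ iterBeth κ n`. -/
def iterBeth (κ : Cardinal) : ℕ → Cardinal
  | 0 => κ
  | n + 1 => 2 ^ iterBeth κ n

/-!
Induction on `r`, the case `r = 0` being the pigeonhole principle for the regular cardinal `κ⁺`.
For the step put `λ = beth_r(κ)`, let `|A| ≥ (2^λ)⁺` and let `O` be a well-order of type
`λ⁺`. For each `a : A` choose transfinitely points `e_a(α)`, each new and realizing the type of `a`
over the earlier ones: adding `e_a(α)` or `a` to a finite set of earlier points gives the same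
colour. If every sequence eventually picked `a` itself, `a` would be determined by the stage
`δ < λ⁺` where this happens and by the colours of `a ∪ e_a[I]` for finite `I ⊆ δ`: at most
`λ⁺ · κ^λ = 2^λ` possibilities. Hence some `e = e_a` is injective, and the colour of `e[J]` depends
only on `J` minus its maximum. The induction hypothesis applied to this colouring of `O` gives a
homogeneous set `H ⊆ O` of size `κ⁺`, and `e[H]` is homogeneous for the original colouring.
-/

open Function Set Order

universe u

namespace ErdosRado

theorem self_le_iterBeth (κ : Cardinal) : ∀ r, κ ≤ iterBeth κ r
  | 0 => le_rfl
  | r + 1 => (self_le_iterBeth κ r).trans (cantor _).le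

theorem mk_finset_arrow_le_two_power {X ι : Type u} {lam : Cardinal.{u}} (hlam : ℵ₀ ≤ lam)
    (hX : #X ≤ lam) (hι : #ι ≤ lam) : #(Finset X → ι) ≤ 2 ^ lam := by
  classical
  have hfin : #(Finset X) ≤ lam :=
    calc #(Finset X) ≤ #(List X) := mk_le_of_surjective List.toFinset_surjective
      _ ≤ max ℵ₀ #X := mk_list_le_max X
      _ ≤ lam := max_le hlam hX
  calc #(Finset X → ι) = #ι ^ #(Finset X) := (power_def ι _).symm
    _ ≤ lam ^ lam := power_le_power_right hι |>.trans <|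
        power_le_power_left (aleph0_pos.trans_le hlam).ne' hfin
    _ = 2 ^ lam := power_self_eq hlam

section

variable {A ι O : Type*} [DecidableEq A]

def IsHomogeneous (c : Finset A → ι) (m : ℕ) (H : Set A) : Prop :=
  ∀ s t : Finset A, ↑s ⊆ H → ↑t ⊆ H → s.card = m → t.card = m → c s = c t

section Realizers

variable (c : Finset A → ι)

def SameTypeOver (P : Set A) (y z : A) : Prop :=
  ∀ s : Finset A, ↑s ⊆ P → c (insert y s) = c (insert z s)

variable {c} in
theorem SameTypeOver.congr_right {P : Set A} {y z z' : A} (h : SameTypeOver c P z z') :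
    SameTypeOver c P y z ↔ SameTypeOver c P y z' :=
  forall₂_congr fun s hs => by rw [h s hs]

variable [LinearOrder O] [WellFoundedLT O]

/-- Choosing with `Classical.epsilon` makes each point depend only on the set of candidates; this is
what lets the colours of `a` over its own sequence determine the sequence (`realizerSeq_eqOn`). -/
noncomputable def realizerSeq (a : A) : O → A :=
  WellFoundedLT.fix fun α prev =>
    let P := {x | ∃ β, ∃ hβ : β < α, prev β hβ = x}
    @Classical.epsilon A ⟨a⟩ fun y => y ∉ P ∧ SameTypeOver c P y a

theorem realizerSeq_eq (a : A) (α : O) :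
    realizerSeq c a α = @Classical.epsilon A ⟨a⟩ fun y =>
      y ∉ realizerSeq c a '' Iio α ∧ SameTypeOver c (realizerSeq c a '' Iio α) y a := by
  rw [realizerSeq, WellFoundedLT.fix_eq]
  simp only [Set.image, mem_Iio, exists_prop]

theorem realizerSeq_spec {a : A} {α : O} (ha : a ∉ realizerSeq c a '' Iio α) :
    realizerSeq c a α ∉ realizerSeq c a '' Iio α ∧
      SameTypeOver c (realizerSeq c a '' Iio α) (realizerSeq c a α) a := by
  rw [realizerSeq_eq]
  exact Classical.epsilon_spec (p := fun y => y ∉ realizerSeq c a '' Iio α ∧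
    SameTypeOver c (realizerSeq c a '' Iio α) y a) ⟨a, ha, fun _ _ => rfl⟩

theorem realizerSeq_eqOn {a a' : A} {β : O}
    (h : ∀ I : Finset O, ↑I ⊆ Iio β →
      c (insert a (I.image (realizerSeq c a))) = c (insert a' (I.image (realizerSeq c a')))) :
    EqOn (realizerSeq c a) (realizerSeq c a') (Iic β) := by
  intro γ
  induction γ using WellFoundedLT.induction with
  | ind γ ih =>
    intro hγ
    have hprev : EqOn (realizerSeq c a) (realizerSeq c a') (Iio γ) :=
      fun δ hδ => ih δ hδ (le_of_lt (lt_of_lt_of_le hδ hγ))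
    have hsame : SameTypeOver c (realizerSeq c a '' Iio γ) a a' := by
      intro s hs
      obtain ⟨I, hI, rfl⟩ := Finset.subset_set_image_iff.mp hs
      rw [h I (hI.trans (Iio_subset_Iio hγ)), Finset.image_congr (hprev.mono hI)]
    rw [realizerSeq_eq, realizerSeq_eq, ← hprev.image_eq]
    simp only [hsame.congr_right]

end Realizers

theorem isHomogeneous_image [LinearOrder O] {c : Finset A → ι} {a : A}
    {e : O → A} (he : Injective e) (hend : ∀ α, SameTypeOver c (e '' Iio α) (e α) a) {n : ℕ}
    {H : Set O} (hH : IsHomogeneous (fun I => c (insert a (I.image e))) (n + 1) H) :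
    IsHomogeneous c (n + 2) (e '' H) := by
  have hcolor : ∀ s : Finset A, ↑s ⊆ e '' H → s.card = n + 2 →
      ∃ I : Finset O, ↑I ⊆ H ∧ I.card = n + 1 ∧ c s = c (insert a (I.image e)) := by
    intro s hs hcard
    obtain ⟨J, hJ, rfl⟩ := Finset.subset_set_image_iff.mp hs
    rw [Finset.card_image_of_injective _ he] at hcard
    have hne : J.Nonempty := Finset.card_pos.mp (by omega)
    set α := J.max' hne
    have hmax : α ∈ J := J.max'_mem hne
    refine ⟨J.erase α, (Finset.coe_subset.mpr (J.erase_subset α)).trans hJ, ?_, ?_⟩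
    · rw [Finset.card_erase_of_mem hmax, hcard]; rfl
    · conv_lhs => rw [← Finset.insert_erase hmax, Finset.image_insert]
      refine hend α _ ?_
      rw [Finset.coe_image]
      exact image_mono fun β hβ => J.lt_max'_of_mem_erase_max' hne hβ
  intro s t hs ht hs' ht'
  obtain ⟨I, hI, hIcard, hsI⟩ := hcolor s hs hs'
  obtain ⟨J, hJ, hJcard, htJ⟩ := hcolor t ht ht'
  rw [hsI, htJ]
  exact hH I J hI hJ hIcard hJcard

end

section Counting

variable {A ι O : Type u} [DecidableEq A] [LinearOrder O] [WellFoundedLT O] {lam : Cardinal.{u}}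

theorem exists_forall_realizerSeq_ne (hlam : ℵ₀ ≤ lam) (hι : #ι ≤ lam) (hO : #O ≤ 2 ^ lam)
    (hIio : ∀ β : O, #(Iio β) ≤ lam) (hA : 2 ^ lam < #A) (c : Finset A → ι) :
    ∃ a : A, ∀ α : O, realizerSeq c a α ≠ a := by
  by_contra! hreturn
  choose δ hδ using hreturn
  -- `a` is coded by its return time `δ a` and its colours over the sequence before `δ a`.
  have hfiber : ∀ β : O, #(δ ⁻¹' {β}) ≤ 2 ^ lam := by
    intro β
    let code : δ ⁻¹' {β} → Finset (Iio β) → ι := fun a I =>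
      c (insert a.1 ((I.map (Embedding.subtype _)).image (realizerSeq c a.1)))
    have hcode : Injective code := by
      rintro ⟨a, rfl⟩ ⟨a', ha'⟩
      intro he
      have heqOn := realizerSeq_eqOn c (β := δ a) fun I hI => by
        simpa [code, Finset.subtype_map_of_mem hI] using congrFun he (I.subtype (· ∈ Iio (δ a)))
      ext
      calc a = realizerSeq c a (δ a) := (hδ a).symm
        _ = realizerSeq c a' (δ a') := by rw [heqOn self_mem_Iic, ha']
        _ = a' := hδ a'
    exact (mk_le_of_injective hcode).trans (mk_finset_arrow_le_two_power hlam (hIio β) hι)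
  have h2lam : ℵ₀ ≤ 2 ^ lam := hlam.trans (cantor lam).le
  exact hA.not_ge <| calc
    #A ≤ #O * 2 ^ lam := mk_le_mk_mul_of_mk_preimage_le δ hfiber
    _ ≤ 2 ^ lam * 2 ^ lam := mul_le_mul' hO le_rfl
    _ = 2 ^ lam := mul_eq_self h2lam

theorem exists_injective_sameTypeOver (hlam : ℵ₀ ≤ lam) (hι : #ι ≤ lam) (hO : #O ≤ 2 ^ lam)
    (hIio : ∀ β : O, #(Iio β) ≤ lam) (hA : 2 ^ lam < #A) (c : Finset A → ι) :
    ∃ (a : A) (e : O → A), Injective e ∧ ∀ α, SameTypeOver c (e '' Iio α) (e α) a := by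
  obtain ⟨a, ha⟩ := exists_forall_realizerSeq_ne hlam hι hO hIio hA c
  have hspec α := realizerSeq_spec c (α := α) fun ⟨β, _, hβ⟩ => ha β hβ
  refine ⟨a, realizerSeq c a, Injective.of_lt_imp_ne fun β α hβα hβα' => ?_, fun α => (hspec α).2⟩
  exact (hspec α).1 ⟨β, hβα, hβα'⟩

end Counting

theorem exists_isHomogeneous_one {A ι : Type u} {κ : Cardinal.{u}} (hκ : ℵ₀ ≤ κ) (hι : #ι ≤ κ)
    (hA : succ κ ≤ #A) (c : Finset A → ι) : ∃ H : Set A, succ κ ≤ #H ∧ IsHomogeneous c 1 H := by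
  obtain ⟨i, hi⟩ := infinite_pigeonhole_card (fun a => c {a}) (succ κ) hA (hκ.trans (le_succ κ))
    (by rw [(isRegular_succ hκ).cof_ord]; exact hι.trans_lt (lt_succ κ))
  refine ⟨_, hi, fun s t hs ht hs1 ht1 => ?_⟩
  obtain ⟨x, rfl⟩ := Finset.card_eq_one.mp hs1
  obtain ⟨y, rfl⟩ := Finset.card_eq_one.mp ht1
  exact (hs (Finset.mem_singleton_self x)).trans (ht (Finset.mem_singleton_self y)).symm

theorem exists_isHomogeneous {κ : Cardinal.{u}} (hκ : ℵ₀ ≤ κ) {ι : Type u} (hι : #ι ≤ κ) (r : ℕ)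
    {A : Type u} (hA : succ (iterBeth κ r) ≤ #A) (c : Finset A → ι) :
    ∃ H : Set A, succ κ ≤ #H ∧ IsHomogeneous c (r + 1) H := by
  induction r generalizing A with
  | zero => exact exists_isHomogeneous_one hκ hι hA c
  | succ r ih =>
    classical
    set lam := iterBeth κ r
    let O := (succ lam).ord.ToType
    have hO : #O = succ lam := by simp [O]
    have hIio (β : O) : #(Iio β) ≤ lam := lt_succ_iff.mp ((mk_Iio_lt β (by simp [O])).trans_eq hO)
    obtain ⟨a, e, he, hend⟩ := exists_injective_sameTypeOver (hκ.trans (self_le_iterBeth κ r))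
      (hι.trans (self_le_iterBeth κ r)) (hO.trans_le (succ_le_of_lt (cantor lam))) hIio
      ((lt_succ _).trans_le hA) c
    obtain ⟨H, hH, hHom⟩ := ih hO.ge fun I => c (insert a (I.image e))
    exact ⟨e '' H, by rwa [mk_image_eq he], isHomogeneous_image he hend hHom⟩

end ErdosRado

/-- Erdős–Rado: for every infinite cardinal `κ` and natural number `r`,
`beth_r(κ)⁺ → (κ⁺)^{r+1}_κ`: every coloring of the `(r+1)`-element subsets of a set of
size `beth_r(κ)⁺` in at most `κ` colors admits a homogeneous set of size `κ⁺`. -/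
theorem stmt5 (κ : Cardinal) (hκ : ℵ₀ ≤ κ) (r : ℕ)
    (A : Type) (hA : #A = Order.succ (iterBeth κ r))
    (ι : Type) (hι : #ι ≤ κ) (c : Finset A → ι) :
    ∃ H : Set A, Order.succ κ ≤ #H ∧
      ∀ s t : Finset A, ↑s ⊆ H → ↑t ⊆ H → s.card = r + 1 → t.card = r + 1 →
        c s = c t :=
  ErdosRado.exists_isHomogeneous hκ hι r hA.ge c
end

section
/- Suppose κ_i, λ_i (1 ≤ i ≤ s) are infinite cardinals with κ_i > beth_{r-1}(λ_i) and λ_{i+1} ≥ 2^{κ_i} for all relevant i, and λ_1 is infinite. Then the polarized partition relation (κ_1, …, κ_s) → (λ_1^+, …, λ_s^+)^r_{λ_1} holds: for every coloring of [κ_1]^r × … × [κ_s]^r in λ_1 colors, there exist sets X_i ⊆ κ_i with |X_i| = λ_i^+ such that [X_1]^r × … × [X_s]^r is monochromatic. -/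
/-!
The core is the Erdős–Rado theorem `beth_r(λ)⁺ → (λ⁺)^{r+1}_λ`, by induction on `r`. Put
`μ = beth_{r-1}(λ)` and let `|S| > 2^μ`. For each `a ∈ S`, build by transfinite recursion along
`μ⁺` a sequence whose next term is a new point of `S` that `c` cannot tell apart from `a` over
the `(r+1)`-subsets of the earlier terms. If some sequence never gets stuck, the colour of an
`(r+2)`-subset of it is `c (x ∪ {a})`, where `x` omits the last term, and the induction hypothesis
applies to `x ↦ c (x ∪ {a})`. Otherwise every `a ∈ S` is recovered from the stage where its
sequence gets stuck (it must have appeared by then), its position in the sequence, and the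
colours `c (x ∪ {a})` over the earlier terms: at most `2^μ` possibilities, too few.

The polarized relation follows by induction on `s`: colour the `r`-sets of the last coordinate by
the colouring they induce on the other coordinates. There are at most
`λ₁ ^ (κ₁ ⋯ κ_{s-1}) ≤ 2^κ_{s-1} ≤ λ_s` such colours, so Erdős–Rado gives a homogeneous set of
size `λ_s⁺`; fix one `r`-subset of it and recurse on the first `s - 1` coordinates.
-/

open Cardinal

/-- The polarized partition relation `(κ_1,…,κ_s) → (l_1,…,l_s)^r_μ`: every coloring of
`[κ_1]^r × … × [κ_s]^r` in at most `μ` colors admits sets `X_i` of size `l_i` whose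
product of `r`-element subsets is monochromatic. -/
def Polarized (s : ℕ) (κ l : Fin s → Cardinal) (r : ℕ) (μ : Cardinal) : Prop :=
  ∀ (A : Fin s → Type), (∀ i, #(A i) = κ i) →
    ∀ (ι : Type), #ι ≤ μ →
      ∀ c : (∀ i, Finset (A i)) → ι,
        ∃ X : ∀ i, Set (A i), (∀ i, #(X i) = l i) ∧
          ∀ f g : ∀ i, Finset (A i),
            (∀ i, ↑(f i) ⊆ X i ∧ (f i).card = r) →
            (∀ i, ↑(g i) ⊆ X i ∧ (g i).card = r) →
            c f = c g

open Order Set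

universe u

theorem le_iterBeth (a : Cardinal) : ∀ n, a ≤ iterBeth a n
  | 0 => le_rfl
  | n + 1 => (le_iterBeth a n).trans (cantor _).le

theorem mk_finset_le_max (α : Type u) : #(Finset α) ≤ max ℵ₀ #α := by
  classical
  exact (mk_le_of_surjective List.toFinset_surjective).trans (mk_list_le_max α)

theorem power_le_two_power {a b μ : Cardinal} (hμ : ℵ₀ ≤ μ) (ha : a ≤ 2 ^ μ) (hb : b ≤ μ) :
    a ^ b ≤ 2 ^ μ :=
  calc a ^ b ≤ (2 ^ μ) ^ b := power_le_power_right ha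
    _ ≤ (2 ^ μ) ^ μ := power_le_power_left (power_ne_zero _ two_ne_zero) hb
    _ = 2 ^ μ := by rw [← power_mul, mul_eq_self hμ]

theorem power_prod_le {σ : Type*} [Fintype σ] {κ : σ → Cardinal} {μ lam : Cardinal}
    (hκ : ∀ i, ℵ₀ ≤ κ i) (hμ : μ ≤ lam) (hμκ : ∀ i, μ ≤ κ i) (hlam : ∀ i, 2 ^ κ i ≤ lam) :
    μ ^ ∏ i, κ i ≤ lam := by
  cases isEmpty_or_nonempty σ
  · simpa using hμ
  obtain ⟨i, hi⟩ := Finite.exists_max κ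
  have hprod : ∏ j, κ j ≤ κ i :=
    calc ∏ j, κ j ≤ κ i ^ Fintype.card σ := Finset.prod_le_pow_card _ _ _ fun j _ => hi j
      _ = κ i := power_nat_eq (hκ i) Fintype.card_pos
  exact (power_le_two_power (hκ i) ((hμκ i).trans (cantor _).le) hprod).trans (hlam i)

def IsHomogeneous {A ι : Type*} (c : Finset A → ι) (n : ℕ) (X : Set A) : Prop :=
  ∀ f g : Finset A, ↑f ⊆ X → f.card = n → ↑g ⊆ X → g.card = n → c f = c g

theorem exists_erase_subset_image_Iio {O A : Type*} [LinearOrder O] [DecidableEq A]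
    {E : O → A} (hE : Function.Injective E) {f : Finset A} (hf : ↑f ⊆ range E)
    (hne : f.Nonempty) : ∃ m, E m ∈ f ∧ ↑(f.erase (E m)) ⊆ E '' Iio m := by
  have hu : (f.preimage E hE.injOn).Nonempty := by
    obtain ⟨b, hb⟩ := hne
    obtain ⟨k, rfl⟩ := hf hb
    exact ⟨k, Finset.mem_preimage.2 hb⟩
  set m := (f.preimage E hE.injOn).max' hu
  refine ⟨m, Finset.mem_preimage.1 (Finset.max'_mem _ hu), fun b hb => ?_⟩
  obtain ⟨hbm, hbf⟩ := Finset.mem_erase.1 hb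
  obtain ⟨k, rfl⟩ := hf hbf
  exact ⟨k, lt_of_le_of_ne (Finset.le_max' _ k (Finset.mem_preimage.2 hbf))
    (by rintro rfl; exact hbm rfl), rfl⟩

theorem IsHomogeneous.succ_of_endHomogeneous {O A ι : Type*} [LinearOrder O] [DecidableEq A]
    {c : Finset A → ι} {n : ℕ} {E : O → A} (hE : Function.Injective E) {a : A} {X : Set A}
    (hX : X ⊆ range E)
    (hend : ∀ m x, ↑x ⊆ E '' Iio m → x.card = n → c (insert (E m) x) = c (insert a x))
    (hhom : IsHomogeneous (fun x => c (insert a x)) n X) : IsHomogeneous c (n + 1) X := by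
  have hreduce : ∀ f : Finset A, ↑f ⊆ X → f.card = n + 1 →
      ∃ x : Finset A, ↑x ⊆ X ∧ x.card = n ∧ c f = c (insert a x) := by
    intro f hfX hcard
    obtain ⟨m, hm, hsub⟩ :=
      exists_erase_subset_image_Iio hE (hfX.trans hX) (Finset.card_pos.1 (by omega))
    have hcard' : (f.erase (E m)).card = n := by rw [Finset.card_erase_of_mem hm, hcard]; rfl
    refine ⟨f.erase (E m), fun y hy => hfX (Finset.mem_of_mem_erase hy), hcard', ?_⟩
    rw [← hend m _ hsub hcard', Finset.insert_erase hm]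
  intro f g hf hfn hg hgn
  obtain ⟨x, hx, hxn, hfx⟩ := hreduce f hf hfn
  obtain ⟨y, hy, hyn, hgy⟩ := hreduce g hg hgn
  rw [hfx, hgy]
  exact hhom x y hx hxn hy hyn

namespace ErdosRado

variable {A ι : Type u} [DecidableEq A] (c : Finset A → ι) (n : ℕ) (S : Set A)

def candidates (P : Set A) (a : A) : Set A :=
  {b ∈ S \ P | ∀ x : Finset A, ↑x ⊆ P → x.card = n → c (insert b x) = c (insert a x)}

theorem candidates_congr {P : Set A} {a a' : A}
    (h : ∀ x : Finset A, ↑x ⊆ P → x.card = n → c (insert a x) = c (insert a' x)) :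
    candidates c n S P a = candidates c n S P a' := by
  ext b
  refine and_congr_right fun _ => forall₂_congr fun x hx => forall_congr' fun hxn => ?_
  rw [h x hx hxn]

variable {O : Type u} [LinearOrder O] [WellFoundedLT O]

-- The fallback value `a` is junk: only the stages before the first one without candidates matter.
open scoped Classical in
noncomputable def seq (a : A) : O → A :=
  wellFounded_lt.fix fun i prev =>
    if h : (candidates c n S (range fun j : Iio i => prev j j.2) a).Nonempty then h.some else a

open scoped Classical in
theorem seq_eq (a : A) (i : O) :
    seq c n S a i =
      if h : (candidates c n S (seq c n S a '' Iio i) a).Nonempty then h.some else a := by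
  rw [seq, WellFounded.fix_eq, image_eq_range]

theorem seq_mem_candidates {a : A} {i : O}
    (h : (candidates c n S (seq c n S a '' Iio i) a).Nonempty) :
    seq c n S a i ∈ candidates c n S (seq c n S a '' Iio i) a := by
  rw [seq_eq, dif_pos h]
  exact h.some_mem

theorem mem_image_seq {a : A} (ha : a ∈ S) {i : O}
    (h : ¬ (candidates c n S (seq c n S a '' Iio i) a).Nonempty) : a ∈ seq c n S a '' Iio i :=
  by_contra fun h' => h ⟨a, ⟨ha, h'⟩, fun _ _ _ => rfl⟩

theorem eqOn_seq {a a' : A} {i : O}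
    (hi : ∀ j < i, (candidates c n S (seq c n S a '' Iio j) a).Nonempty)
    (htrace : ∀ u : Finset O, (∀ k ∈ u, k < i) →
      c (insert a (u.image (seq c n S a))) = c (insert a' (u.image (seq c n S a')))) :
    EqOn (seq c n S a) (seq c n S a') (Iio i) := by
  intro j
  induction j using WellFoundedLT.induction with
  | _ j ih =>
  intro hj
  have hprefix : EqOn (seq c n S a) (seq c n S a') (Iio j) := fun k hk => ih k hk (lt_trans hk hj)
  have hcand : candidates c n S (seq c n S a '' Iio j) a =
      candidates c n S (seq c n S a' '' Iio j) a' := by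
    rw [← hprefix.image_eq]
    refine candidates_congr c n S fun x hx _ => ?_
    obtain ⟨u, hu, rfl⟩ := Finset.subset_set_image_iff.1 hx
    rw [htrace u fun k hk => lt_trans (hu hk) hj, Finset.image_congr (hprefix.mono hu)]
  have hne := hcand ▸ hi j hj
  rw [seq_eq c n S a j, seq_eq c n S a' j, hcand, dif_pos hne, dif_pos hne]

theorem exists_forall_candidates_nonempty {μ : Cardinal.{u}} (hμ : ℵ₀ ≤ μ) (hO : #O ≤ 2 ^ μ)
    (hIio : ∀ i : O, #(Iio i) ≤ μ) (hι : #ι ≤ 2 ^ μ) (hS : 2 ^ μ < #S) :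
    ∃ a, ∀ i : O, (candidates c n S (seq c n S a '' Iio i) a).Nonempty := by
  by_contra hnever
  simp only [not_exists, not_forall] at hnever
  choose stuck hstuck hmin using fun a => wellFounded_lt.has_min _ (hnever a)
  have hbelow : ∀ a, ∀ j < stuck a, (candidates c n S (seq c n S a '' Iio j) a).Nonempty :=
    fun a j hj => by_contra fun h => hmin a j h hj
  choose self hself_lt hself_eq using fun a : S => mem_image_seq c n S a.2 (hstuck a)
  have hdet : ∀ a a' : S, self a = self a' →
      (∀ u : Finset O, (∀ k ∈ u, k < stuck a) →
        c (insert a.1 (u.image (seq c n S a))) = c (insert a'.1 (u.image (seq c n S a')))) →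
      a = a' := by
    intro a a' hself htrace
    refine Subtype.ext ?_
    calc a.1 = seq c n S a (self a) := (hself_eq a).symm
      _ = seq c n S a' (self a) := eqOn_seq c n S (hbelow a) htrace (hself_lt a)
      _ = a' := by rw [hself, hself_eq a']
  let key : S → O × O := fun a => (stuck a, self a)
  have hfiber : ∀ p : O × O, #(key ⁻¹' {p}) ≤ 2 ^ μ := by
    rintro ⟨i, k⟩
    let types : key ⁻¹' {(i, k)} → {u : Finset O // ∀ j ∈ u, j < i} → ι :=
      fun a u => c (insert a.1.1 (u.1.image (seq c n S a.1.1)))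
    have htypes : Function.Injective types := by
      rintro ⟨a, hkey⟩ ⟨a', hkey'⟩ h
      simp only [key, mem_preimage, mem_singleton_iff, Prod.ext_iff] at hkey hkey'
      refine Subtype.ext (hdet a a' (hkey.2.trans hkey'.2.symm) fun u hu => ?_)
      exact congrFun h ⟨u, hkey.1 ▸ hu⟩
    calc #(key ⁻¹' {(i, k)}) ≤ #({u : Finset O // ∀ j ∈ u, j < i} → ι) :=
          mk_le_of_injective htypes
      _ ≤ 2 ^ μ := by
        rw [← power_def, ← mk_congr (Equiv.finsetSubtypeComm _)]
        exact power_le_two_power hμ hι ((mk_finset_le_max _).trans (max_le hμ (hIio i)))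
  have h2μ : ℵ₀ ≤ 2 ^ μ := hμ.trans (cantor μ).le
  have hS' : #S ≤ 2 ^ μ :=
    calc #S ≤ #(O × O) * 2 ^ μ := mk_le_mk_mul_of_mk_preimage_le key hfiber
      _ ≤ 2 ^ μ * 2 ^ μ * 2 ^ μ := by rw [mk_prod, lift_id]; gcongr
      _ = 2 ^ μ := by rw [mul_eq_self h2μ, mul_eq_self h2μ]
  exact hS.not_ge hS'

end ErdosRado

theorem erdos_rado {A ι : Type u} {lam : Cardinal.{u}} (hlam : ℵ₀ ≤ lam) (hι : #ι ≤ lam)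
    (r : ℕ) (S : Set A) (c : Finset A → ι) (hS : iterBeth lam r < #S) :
    ∃ X ⊆ S, #X = succ lam ∧ IsHomogeneous c (r + 1) X := by
  classical
  induction r generalizing S c with
  | zero =>
    obtain ⟨i, t, htS, ht, hti⟩ := infinite_pigeonhole_set (fun a : S => c {a.1}) (succ lam)
      (succ_le_of_lt hS) (hlam.trans (le_succ lam))
      (by rw [(isRegular_succ hlam).cof_ord]; exact hι.trans_lt (lt_succ lam))
    obtain ⟨X, hXt, hX⟩ := le_mk_iff_exists_subset.1 ht
    have hconst : ∀ f : Finset A, ↑f ⊆ X → f.card = 1 → c f = i := by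
      intro f hf hcard
      obtain ⟨x, rfl⟩ := Finset.card_eq_one.1 hcard
      exact hti (hXt (hf (Finset.mem_singleton_self x)))
    refine ⟨X, hXt.trans htS, hX, fun f g hf hfn hg hgn => ?_⟩
    rw [hconst f hf hfn, hconst g hg hgn]
  | succ r ih =>
    set μ := iterBeth lam r
    have hμ : ℵ₀ ≤ μ := hlam.trans (le_iterBeth lam r)
    let O := (succ μ).ord.ToType
    obtain ⟨a, ha⟩ := ErdosRado.exists_forall_candidates_nonempty c (r + 1) S (O := O) hμ
      (by rw [mk_ord_toType]; exact succ_le_of_lt (cantor μ))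
      (fun i => le_of_lt_succ <| (mk_Iio_lt i (by rw [mk_ord_toType, Ordinal.type_toType])).trans_eq
        (mk_ord_toType _))
      (hι.trans ((le_iterBeth lam r).trans (cantor μ).le)) hS
    set E : O → A := ErdosRado.seq c (r + 1) S a
    have hcand : ∀ i, E i ∈ ErdosRado.candidates c (r + 1) S (E '' Iio i) a :=
      fun i => ErdosRado.seq_mem_candidates c _ S (ha i)
    have hE : Function.Injective E :=
      .of_lt_imp_ne fun i j hij heq => (hcand j).1.2 ⟨i, hij, heq⟩
    obtain ⟨X, hXE, hX, hhom⟩ := ih (range E) (fun x => c (insert a x))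
      (by rw [mk_range_eq E hE, mk_ord_toType]; exact lt_succ μ)
    exact ⟨X, hXE.trans (range_subset_iff.2 fun i => (hcand i).1.1), hX,
      hhom.succ_of_endHomogeneous hE hXE fun m x hx hxn => (hcand m).2 x hx hxn⟩

theorem polarized_zero (κ l : Fin 0 → Cardinal) (r : ℕ) (μ : Cardinal) : Polarized 0 κ l r μ :=
  fun _ _ _ _ c => ⟨finZeroElim, finZeroElim, fun f g _ _ => congrArg c (Subsingleton.elim f g)⟩

theorem polarized_succ {s r : ℕ} {κ l : Fin (s + 1) → Cardinal} {μ : Cardinal} (hr : 0 < r)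
    (hinit : Polarized s (fun i => κ i.castSucc) (fun i => succ (l i.castSucc)) r μ)
    (hκ : ∀ i : Fin s, ℵ₀ ≤ κ i.castSucc) (hl : ℵ₀ ≤ l (Fin.last s))
    (hlast : iterBeth (l (Fin.last s)) (r - 1) < κ (Fin.last s))
    (hcolors : μ ^ ∏ i : Fin s, κ i.castSucc ≤ l (Fin.last s)) :
    Polarized (s + 1) κ (fun i => succ (l i)) r μ := by
  intro A hA ι hι c
  have hcolors' : #((∀ i : Fin s, Finset (A i.castSucc)) → ι) ≤ l (Fin.last s) := by
    rw [← power_def, mk_pi, prod_eq_of_fintype, lift_id]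
    refine (power_le_power_right hι).trans (le_of_eq_of_le ?_ hcolors)
    refine congrArg _ (Finset.prod_congr rfl fun i _ => ?_)
    have : Infinite (A i.castSucc) := infinite_iff.2 ((hκ i).trans_eq (hA _).symm)
    rw [mk_finset_of_infinite, hA]
  obtain ⟨Y, -, hY, hYhom⟩ := erdos_rado hl hcolors' (r - 1) univ
    (fun y F => c (Fin.snoc F y)) (by rwa [mk_univ, hA])
  rw [Nat.sub_add_cancel hr] at hYhom
  have hYinf : Y.Infinite := infinite_coe_iff.1 <| infinite_iff.2 <| hY ▸ hl.trans (le_succ _)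
  obtain ⟨y₀, hy₀Y, hy₀⟩ := hYinf.exists_subset_card_eq r
  obtain ⟨X, hX, hXhom⟩ :=
    hinit (fun i => A i.castSucc) (fun i => hA _) ι hι (fun F => c (Fin.snoc F y₀))
  refine ⟨Fin.snoc X Y, Fin.lastCases (by simpa using hY) fun i => by simpa using hX i, ?_⟩
  have hfactor : ∀ f : ∀ i, Finset (A i),
      (∀ i, ↑(f i) ⊆ Fin.snoc (α := fun i => Set (A i)) X Y i ∧ (f i).card = r) →
      c f = c (Fin.snoc (Fin.init f) y₀) := by
    intro f hf
    have := hYhom (f (Fin.last s)) y₀ (by simpa using (hf (Fin.last s)).1) (hf _).2 hy₀Y hy₀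
    conv_lhs => rw [← Fin.snoc_init_self f]
    exact congrFun this (Fin.init f)
  intro f g hf hg
  rw [hfactor f hf, hfactor g hg]
  exact hXhom _ _ (fun i => by simpa [Fin.init] using hf i.castSucc)
    (fun i => by simpa [Fin.init] using hg i.castSucc)

theorem polarized_of_two_power_le {r : ℕ} (hr : 0 < r) :
    ∀ {s : ℕ} {κ l : Fin s → Cardinal} {μ : Cardinal}, (∀ i, ℵ₀ ≤ l i) →
      (∀ i, iterBeth (l i) (r - 1) < κ i) → (∀ i, μ ≤ l i) → (∀ i j, i < j → 2 ^ κ i ≤ l j) →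
      Polarized s κ (fun i => succ (l i)) r μ
  | 0, κ, _, μ, _, _, _, _ => polarized_zero κ _ r μ
  | s + 1, κ, l, μ, hl, hκl, hμ, hpow => by
    have hlκ : ∀ i, l i ≤ κ i := fun i => (le_iterBeth _ _).trans (hκl i).le
    have hκ : ∀ i, ℵ₀ ≤ κ i := fun i => (hl i).trans (hlκ i)
    refine polarized_succ hr ?_ (fun i => hκ _) (hl _) (hκl _)
      (power_prod_le (fun i => hκ _) (hμ _) (fun i => (hμ _).trans (hlκ _))
        fun i => hpow _ _ (Fin.castSucc_lt_last i))
    exact polarized_of_two_power_le hr (fun i => hl _) (fun i => hκl _) (fun i => hμ _)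
      fun i j hij => hpow _ _ (Fin.castSucc_lt_castSucc_iff.2 hij)

theorem stmt6_general (s r : ℕ) (hs : 0 < s) (hr : 0 < r)
    (κ l : Fin s → Cardinal)
    (hlinf : ∀ i, ℵ₀ ≤ l i)
    (h1 : ∀ i, iterBeth (l i) (r - 1) < κ i)
    (h2 : ∀ i : Fin s, (h : (i : ℕ) + 1 < s) → 2 ^ κ i ≤ l ⟨(i : ℕ) + 1, h⟩) :
    Polarized s κ (fun i => Order.succ (l i)) r (l ⟨0, hs⟩) := by
  obtain ⟨s, rfl⟩ : ∃ t, s = t + 1 := ⟨s - 1, by omega⟩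
  have hmono : Monotone l := Fin.monotone_iff_le_succ.2 fun i =>
    (le_iterBeth _ _).trans <| (h1 _).le.trans <| (cantor _).le.trans <| h2 i.castSucc i.succ.is_lt
  exact polarized_of_two_power_le hr hlinf h1 (fun i => hmono (Nat.zero_le i))
    fun i j hij => (h2 i (by omega)).trans (hmono (Nat.succ_le_of_lt hij))

/-- If `κ_i, l_i` (`1 ≤ i ≤ s`) are infinite cardinals with `κ_i > beth_{r-1}(l_i)` and
`l_{i+1} ≥ 2^{κ_i}`, then `(κ_1,…,κ_s) → (l_1⁺,…,l_s⁺)^r_{l_1}`. -/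
theorem stmt6 (s r : ℕ) (hs : 0 < s) (hr : 0 < r)
    (κ l : Fin s → Cardinal)
    (hκinf : ∀ i, ℵ₀ ≤ κ i) (hlinf : ∀ i, ℵ₀ ≤ l i)
    (h1 : ∀ i, iterBeth (l i) (r - 1) < κ i)
    (h2 : ∀ i : Fin s, (h : (i : ℕ) + 1 < s) → 2 ^ κ i ≤ l ⟨(i : ℕ) + 1, h⟩) :
    Polarized s κ (fun i => Order.succ (l i)) r (l ⟨0, hs⟩) :=
  stmt6_general s r hs hr κ l hlinf h1 h2
end

section
/- If (κ_1,…,κ_s) → (λ_1,…,λ_s)^r_μ and (κ_{s+1},…,κ_{s+t}) → (λ_{s+1},…,λ_{s+t})^r_{μ'} where μ' ≥ μ^{κ_1·…·κ_s}, then (κ_1,…,κ_{s+t}) → (λ_1,…,λ_{s+t})^r_μ. -/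
open Cardinal

/-- Erdős–Rado product lemma for polarized partition relations: if
`(κ_1,…,κ_s) → (l_1,…,l_s)^r_μ` and `(κ_{s+1},…,κ_{s+t}) → (l_{s+1},…,l_{s+t})^r_{μ'}`
where `μ' ≥ μ^{κ_1 ⬝ … ⬝ κ_s}`, then `(κ_1,…,κ_{s+t}) → (l_1,…,l_{s+t})^r_μ`. -/
theorem stmt7 (s t r : ℕ) (κ l : Fin (s + t) → Cardinal) (μ μ' : Cardinal)
    (hκinf : ∀ i, ℵ₀ ≤ κ i) (hlinf : ∀ i, ℵ₀ ≤ l i)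
    (h1 : Polarized s (fun i => κ (Fin.castAdd t i)) (fun i => l (Fin.castAdd t i)) r μ)
    (h2 : Polarized t (fun i => κ (Fin.natAdd s i)) (fun i => l (Fin.natAdd s i)) r μ')
    (hμ' : μ ^ (∏ i : Fin s, κ (Fin.castAdd t i)) ≤ μ') :
    Polarized (s + t) κ l r μ := by
  intro A hA ι hι c
  set B₁ : Fin s → Type := fun i => A (Fin.castAdd t i) with hB₁
  set B₂ : Fin t → Type := fun j => A (Fin.natAdd s j) with hB₂
  -- the combining operation
  let comb : (∀ i, Finset (B₁ i)) → (∀ j, Finset (B₂ j)) → ∀ i, Finset (A i) :=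
    fun h f => Fin.addCases (motive := fun i => Finset (A i)) h f
  -- the second coloring
  let ι' : Type := (∀ i, Finset (B₁ i)) → ι
  have hinfB₁ : ∀ i, Infinite (B₁ i) := fun i => by
    rw [Cardinal.infinite_iff, hA]; exact hκinf _
  have hι' : #ι' ≤ μ' := by
    have h0 : #ι' = #ι ^ #(∀ i, Finset (B₁ i)) :=
      (Cardinal.power_def ι (∀ i, Finset (B₁ i))).symm
    have h1' : #(∀ i, Finset (B₁ i)) = ∏ i : Fin s, κ (Fin.castAdd t i) := by
      rw [Cardinal.mk_pi]
      have : (fun i => #(Finset (B₁ i))) = fun i => κ (Fin.castAdd t i) := by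
        funext i
        haveI := hinfB₁ i
        rw [Cardinal.mk_finset_of_infinite, hA]
      rw [this, Cardinal.prod_eq_of_fintype]
      simp
    calc #ι' = #ι ^ #(∀ i, Finset (B₁ i)) := h0
      _ ≤ μ ^ #(∀ i, Finset (B₁ i)) := Cardinal.power_le_power_right hι
      _ = μ ^ (∏ i : Fin s, κ (Fin.castAdd t i)) := by rw [h1']
      _ ≤ μ' := hμ'
  let c₂ : (∀ j, Finset (B₂ j)) → ι' := fun f h => c (comb h f)
  obtain ⟨X₂, hX₂card, hX₂mono⟩ := h2 B₂ (fun j => hA _) ι' hι' c₂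
  -- pick g₀, a fixed tuple inside X₂
  have hX₂inf : ∀ j, (X₂ j).Infinite := fun j => by
    rw [← Set.infinite_coe_iff, Cardinal.infinite_iff, hX₂card]
    exact hlinf _
  choose g₀ hg₀sub hg₀card using fun j => (hX₂inf j).exists_subset_card_eq r
  have hg₀ : ∀ j, ↑(g₀ j) ⊆ X₂ j ∧ (g₀ j).card = r := fun j => ⟨hg₀sub j, hg₀card j⟩
  -- the first coloring
  let c₁ : (∀ i, Finset (B₁ i)) → ι := fun h => c (comb h g₀)
  obtain ⟨X₁, hX₁card, hX₁mono⟩ := h1 B₁ (fun i => hA _) ι hι c₁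
  -- combine the homogeneous sets
  refine ⟨fun i => Fin.addCases (motive := fun i => Set (A i)) X₁ X₂ i, ?_, ?_⟩
  · intro i
    refine Fin.addCases (motive := fun i =>
      #(Fin.addCases (motive := fun i => Set (A i)) X₁ X₂ i) = l i) ?_ ?_ i
    · intro i; rw [Fin.addCases_left]; exact hX₁card i
    · intro j; rw [Fin.addCases_right]; exact hX₂card j
  · intro f g hf hg
    have split : ∀ F : ∀ i, Finset (A i),
        comb (fun i => F (Fin.castAdd t i)) (fun j => F (Fin.natAdd s j)) = F := by
      intro F
      funext i
      refine Fin.addCases (motive := fun i =>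
        comb (fun i => F (Fin.castAdd t i)) (fun j => F (Fin.natAdd s j)) i = F i) ?_ ?_ i
      · intro i; exact Fin.addCases_left i
      · intro j; exact Fin.addCases_right j
    have hf₁ : ∀ i, ↑(f (Fin.castAdd t i)) ⊆ X₁ i ∧ (f (Fin.castAdd t i)).card = r := by
      intro i
      have := hf (Fin.castAdd t i)
      simpa only [Fin.addCases_left] using this
    have hg₁ : ∀ i, ↑(g (Fin.castAdd t i)) ⊆ X₁ i ∧ (g (Fin.castAdd t i)).card = r := by
      intro i
      have := hg (Fin.castAdd t i)
      simpa only [Fin.addCases_left] using this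
    have hf₂ : ∀ j, ↑(f (Fin.natAdd s j)) ⊆ X₂ j ∧ (f (Fin.natAdd s j)).card = r := by
      intro j
      have := hf (Fin.natAdd s j)
      simpa only [Fin.addCases_right] using this
    have hg₂ : ∀ j, ↑(g (Fin.natAdd s j)) ⊆ X₂ j ∧ (g (Fin.natAdd s j)).card = r := by
      intro j
      have := hg (Fin.natAdd s j)
      simpa only [Fin.addCases_right] using this
    calc c f = c (comb (fun i => f (Fin.castAdd t i)) (fun j => f (Fin.natAdd s j))) := by
            rw [split]
      _ = c (comb (fun i => f (Fin.castAdd t i)) g₀) :=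
            congrFun (hX₂mono (fun j => f (Fin.natAdd s j)) g₀ hf₂ hg₀) _
      _ = c₁ (fun i => f (Fin.castAdd t i)) := rfl
      _ = c₁ (fun i => g (Fin.castAdd t i)) := hX₁mono _ _ hf₁ hg₁
      _ = c (comb (fun i => g (Fin.castAdd t i)) g₀) := rfl
      _ = c (comb (fun i => g (Fin.castAdd t i)) (fun j => g (Fin.natAdd s j))) :=
            (congrFun (hX₂mono (fun j => g (Fin.natAdd s j)) g₀ hg₂ hg₀) _).symm
      _ = c g := by rw [split]
end

section
/- Let κ be a cardinal and let M = (κ, ∈, F, U) be a structure where U is interpreted as a proper initial segment of κ and F : κ → κ maps U cofinally into κ. Then M has no proper elementary end extension: if N is an elementary extension of M such that M is an initial segment of N and N ≠ M, a contradiction follows. -/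
/-!
Asymmetry of `<`, cofinality of `F` on `U`, and "`a` bounds `U`" are first-order, so they
pass from `M` to `N`. Take `a ∉ U`; then `g a` bounds `U` in `N`, so by the end-extension
property `U^N` lies inside `M`. If `b ∈ N \ M`, cofinality in `N` gives `u ∈ U^N` with
`b < F u`; but `u ∈ M`, so `F u ∈ M` lies below `b`, contradicting asymmetry.
-/

open FirstOrder Language Structure Cardinal

/-- The language `{<, F, U}`: one unary function `F`, one unary relation `U`, and one
binary relation `<`. -/
def LFU : FirstOrder.Language where
  Functions := fun n => match n with | 1 => PUnit | _ => PEmpty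
  Relations := fun n => match n with | 1 => PUnit | 2 => PUnit | _ => PEmpty

/-- The function symbol `F`. -/
def LFU.Fsym : LFU.Functions 1 := PUnit.unit

/-- The relation symbol `U`. -/
def LFU.Usym : LFU.Relations 1 := PUnit.unit

/-- The relation symbol `<`. -/
def LFU.ltsym : LFU.Relations 2 := PUnit.unit

/-- Interpretation of `<` in an `LFU`-structure. -/
def ltS {M : Type} [LFU.Structure M] (a b : M) : Prop :=
  Structure.RelMap LFU.ltsym ![a, b]

/-- Interpretation of `U` in an `LFU`-structure. -/
def US {M : Type} [LFU.Structure M] (a : M) : Prop :=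
  Structure.RelMap LFU.Usym ![a]

/-- Interpretation of `F` in an `LFU`-structure. -/
def FS {M : Type} [LFU.Structure M] (a : M) : M :=
  Structure.funMap LFU.Fsym ![a]

namespace LFU

variable {M N : Type} [LFU.Structure M] [LFU.Structure N]

theorem map_FS {G : Type} [FunLike G M N] [HomClass LFU G M N] (g : G) (a : M) :
    g (FS a) = FS (g a) := by
  have hcomp : g ∘ ![a] = ![g a] := by ext i; fin_cases i; rfl
  simpa [FS, hcomp] using HomClass.map_fun g Fsym ![a]

def asymmSentence : LFU.Sentence :=
  ∀' ∀' (ltsym.boundedFormula₂ &0 &1 ⟹ ∼(ltsym.boundedFormula₂ &1 &0))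

def cofinalSentence : LFU.Sentence :=
  ∀' ∃' (Usym.boundedFormula₁ &1 ⊓ ltsym.boundedFormula₂ &0 (Fsym.apply₁ &1))

def upperBoundFormula : LFU.Formula (Fin 1) :=
  ∀' (Usym.boundedFormula₁ &0 ⟹ ltsym.boundedFormula₂ &0 (Term.var (Sum.inl 0)))

theorem realize_asymmSentence :
    M ⊨ asymmSentence ↔ ∀ a b : M, ltS a b → ¬ ltS b a := by
  simp [asymmSentence, Sentence.Realize, Formula.Realize, ltS, Fin.snoc]

theorem realize_cofinalSentence :
    M ⊨ cofinalSentence ↔ ∀ a : M, ∃ u : M, US u ∧ ltS a (FS u) := by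
  simp [cofinalSentence, Sentence.Realize, Formula.Realize, US, ltS, FS, Fin.snoc]

theorem realize_upperBoundFormula (x : M) :
    upperBoundFormula.Realize (fun _ => x) ↔ ∀ u : M, US u → ltS u x := by
  simp [upperBoundFormula, Formula.Realize, US, ltS, Fin.snoc]

theorem ltS_asymm_of_elementaryEmbedding (g : M ↪ₑ[LFU] N)
    (h : ∀ a b : M, ltS a b → ¬ ltS b a) : ∀ a b : N, ltS a b → ¬ ltS b a :=
  realize_asymmSentence.1 ((g.map_sentence _).1 (realize_asymmSentence.2 h))

theorem cofinal_of_elementaryEmbedding (g : M ↪ₑ[LFU] N)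
    (h : ∀ a : M, ∃ u : M, US u ∧ ltS a (FS u)) : ∀ a : N, ∃ u : N, US u ∧ ltS a (FS u) :=
  realize_cofinalSentence.1 ((g.map_sentence _).1 (realize_cofinalSentence.2 h))

theorem ltS_of_US_of_elementaryEmbedding (g : M ↪ₑ[LFU] N) {a : M}
    (h : ∀ u : M, US u → ltS u a) : ∀ u : N, US u → ltS u (g a) :=
  (realize_upperBoundFormula (g a)).1
    ((g.map_formula upperBoundFormula fun _ => a).2 ((realize_upperBoundFormula a).2 h))

theorem mem_range_of_US (g : M ↪ₑ[LFU] N) (hasymm : ∀ a b : N, ltS a b → ¬ ltS b a)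
    (hend : ∀ b : N, b ∉ Set.range g → ∀ a : M, ltS (g a) b)
    {a : M} (hbdd : ∀ u : N, US u → ltS u (g a)) {u : N} (hu : US u) : u ∈ Set.range g := by
  by_contra hu'
  exact hasymm _ _ (hbdd u hu) (hend u hu' a)

theorem surjective_of_end_extension (g : M ↪ₑ[LFU] N) (hasymm : ∀ a b : M, ltS a b → ¬ ltS b a)
    (hcof : ∀ a : M, ∃ u : M, US u ∧ ltS a (FS u)) (hbdd : ∃ a : M, ∀ u : M, US u → ltS u a)
    (hend : ∀ b : N, b ∉ Set.range g → ∀ a : M, ltS (g a) b) : Function.Surjective g := by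
  have hasymmN := ltS_asymm_of_elementaryEmbedding g hasymm
  obtain ⟨a, ha⟩ := hbdd
  intro b
  by_contra hb
  obtain ⟨u, hu, hbu⟩ := cofinal_of_elementaryEmbedding g hcof b
  obtain ⟨v, rfl⟩ := mem_range_of_US g hasymmN hend (ltS_of_US_of_elementaryEmbedding g ha) hu
  rw [← map_FS] at hbu
  exact hasymmN _ _ hbu (hend b hb (FS v))

theorem ltS_of_US_of_not_US [LinearOrder M] (hlt : ∀ a b : M, ltS a b ↔ a < b)
    (hUinit : ∀ u v : M, US u → ltS v u → US v) {a : M} (ha : ¬ US a) :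
    ∀ u : M, US u → ltS u a := by
  intro u hu
  rw [hlt, ← not_le]
  intro hau
  rcases hau.lt_or_eq with hau | rfl
  · exact ha (hUinit u a hu ((hlt a u).2 hau))
  · exact ha hu

end LFU

/-- Let `κ` be a cardinal and `M = (κ, ∈, F, U)` a structure where `<` is interpreted
as the order of `κ`, `U` as a proper initial segment, and `F` maps `U` cofinally into
`κ`.  Then `M` has no proper elementary end extension: any elementary embedding
`g : M ↪ₑ N` with all elements outside its range above all of its range is surjective. -/
theorem stmt15 (κ : Cardinal) [LFU.Structure κ.ord.ToType]
    (hlt : ∀ a b : κ.ord.ToType, ltS a b ↔ a < b)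
    (hUinit : ∀ u v : κ.ord.ToType, US u → ltS v u → US v)
    (hUproper : ∃ a : κ.ord.ToType, ¬ US a)
    (hFcof : ∀ a : κ.ord.ToType, ∃ u : κ.ord.ToType, US u ∧ ltS a (FS u))
    (N : Type) [LFU.Structure N] (g : κ.ord.ToType ↪ₑ[LFU] N)
    (hend : ∀ b : N, b ∉ Set.range g → ∀ a : κ.ord.ToType, ltS (g a) b) :
    Function.Surjective g := by
  obtain ⟨a, ha⟩ := hUproper
  have hasymm : ∀ x y : κ.ord.ToType, ltS x y → ¬ ltS y x := fun x y hxy hyx =>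
    lt_asymm ((hlt x y).1 hxy) ((hlt y x).1 hyx)
  exact LFU.surjective_of_end_extension g hasymm hFcof
    ⟨a, LFU.ltS_of_US_of_not_US hlt hUinit ha⟩ hend
end

section
/- Suppose T is a first-order theory in a language containing a linear order symbol < such that T proves: U is a proper initial segment and F maps U cofinally into the universe. Then no model of T has a proper elementary end extension. -/
open FirstOrder Language Structure

def sAsym : LFU.Sentence :=
  ∀' ∀' (LFU.ltsym.boundedFormula₂ (&0) (&1) ⟹ ∼(LFU.ltsym.boundedFormula₂ (&1) (&0)))

def sInit : LFU.Sentence :=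
  ∀' ∀' (LFU.Usym.boundedFormula₁ (&0) ⟹ (LFU.ltsym.boundedFormula₂ (&1) (&0) ⟹ LFU.Usym.boundedFormula₁ (&1)))

def sCof : LFU.Sentence :=
  ∀' ∃' (LFU.Usym.boundedFormula₁ (&1) ⊓ LFU.ltsym.boundedFormula₂ (&0) (LFU.Fsym.apply₁ (&1)))

lemma realize_sAsym (P : Type) [LFU.Structure P] :
    P ⊨ sAsym ↔ ∀ a b : P, ltS a b → ¬ ltS b a := by
  simp [sAsym, ltS, Sentence.Realize, Formula.Realize, Fin.snoc]

lemma realize_sInit (P : Type) [LFU.Structure P] :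
    P ⊨ sInit ↔ ∀ a b : P, US a → ltS b a → US b := by
  simp [sInit, ltS, US, Sentence.Realize, Formula.Realize, Fin.snoc]

lemma realize_sCof (P : Type) [LFU.Structure P] :
    P ⊨ sCof ↔ ∀ a : P, ∃ u : P, US u ∧ ltS a (FS u) := by
  have hfu : ∀ (x : P), (fun _ : Fin 1 => x) = ![x] := fun x => by
    funext i; fin_cases i; rfl
  simp [sCof, ltS, US, FS, Sentence.Realize, Formula.Realize, Fin.snoc,
    Functions.apply₁, Term.realize, hfu]

/-- If `T` proves that `<` is a linear order, `U` is a proper initial segment, and `F`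
maps `U` cofinally into the universe, then no model of `T` (i.e. no structure
satisfying these sentences) has a proper elementary end extension: every elementary
embedding `g : M ↪ₑ N` whose range is an initial segment of `N` is surjective. -/
theorem stmt17 (M : Type) [LFU.Structure M]
    (hirr : ∀ a : M, ¬ ltS a a)
    (htrans : ∀ a b c : M, ltS a b → ltS b c → ltS a c)
    (htotal : ∀ a b : M, ltS a b ∨ a = b ∨ ltS b a)
    (hUinit : ∀ u v : M, US u → ltS v u → US v)
    (hUproper : ∃ a : M, ¬ US a)
    (hFcof : ∀ a : M, ∃ u : M, US u ∧ ltS a (FS u))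
    (N : Type) [LFU.Structure N] (g : M ↪ₑ[LFU] N)
    (hend : ∀ b : N, b ∉ Set.range g → ∀ a : M, ltS (g a) b) :
    Function.Surjective g := by
  intro b
  by_contra hb
  -- transfer sentences to N
  have hAsymN : ∀ a c : N, ltS a c → ¬ ltS c a := by
    rw [← realize_sAsym, ← g.map_sentence, realize_sAsym]
    intro a c hac hca
    exact hirr a (htrans a c a hac hca)
  have hInitN : ∀ a c : N, US a → ltS c a → US c := by
    rw [← realize_sInit, ← g.map_sentence, realize_sInit]
    exact hUinit
  have hCofN : ∀ a : N, ∃ u : N, US u ∧ ltS a (FS u) := by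
    rw [← realize_sCof, ← g.map_sentence, realize_sCof]
    exact hFcof
  obtain ⟨a0, ha0⟩ := hUproper
  have hga0 : ¬ US (g a0 : N) := by
    have h1 := g.map_rel LFU.Usym ![a0]
    have hc : (⇑g ∘ ![a0]) = ![g a0] := by funext i; fin_cases i; rfl
    unfold US at ha0 ⊢
    rw [← hc, h1]; exact ha0
  have hbr : b ∉ Set.range g := fun ⟨a, ha⟩ => hb ⟨a, ha⟩
  obtain ⟨u, hu, hbu⟩ := hCofN b
  -- u must be in the range of g
  have hur : u ∈ Set.range g := by
    by_contra hur
    exact hga0 (hInitN u (g a0) hu (hend u hur a0))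
  obtain ⟨w, rfl⟩ := hur
  have hFw : (FS (g w) : N) = g (FS w) := by
    have h1 := g.map_fun LFU.Fsym ![w]
    have hc : (⇑g ∘ ![w]) = ![g w] := by funext i; fin_cases i; rfl
    unfold FS
    rw [h1, hc]
  rw [hFw] at hbu
  exact hAsymN b (g (FS w)) hbu (hend b hbr (FS w))
end

section
/- Let X_1, …, X_s be linearly ordered sets, each chosen so that between any two of its elements (and below its minimum-candidates and above its maximum-candidates) there are at least r elements of a superset X_i' ⊇ X_i. Suppose a property P holds of all tuples (a_{i_1 j_1}, …, a_{i_n j_n}) extracted from increasing r-tuples a_i ∈ [X_1']^r × … × [X_s']^r at fixed index positions (i_1,j_1),…,(i_n,j_n). Then for any 'equivalent' index pattern (i_1,l_1),…,(i_n,l_n) (same first coordinates, arbitrary second coordinates ≤ r), P holds of all tuples extracted from [X_1]^r × … × [X_s]^r at the new positions. -/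
/-!
The blocks `X 1, …, X s` can be treated one at a time. In block `i`, the entries `a i (l k)`
(`idx k = i`) have to reappear at the positions `j k` of a strictly increasing `r`-tuple through
`X' i`; as both `j` and `l` increase along the block, these entries and positions are in the same
order, and every gap of `X i`, the two unbounded ones included, holds `r` points of `X' i`, so the
remaining positions can be filled. The tuple is built as a finset in which each entry has the
prescribed rank, by induction on the number of entries: below the largest entry `y` the smaller
entries are placed recursively inside `Iio y`, and the positions above `y` are filled from the gap
above it.
-/

open Finset Set

theorem Finset.orderEmbOfFin_eq_of_card_filter_lt {α : Type*} [LinearOrder α] {B : Finset α}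
    {r : ℕ} (hB : #B = r) {x : α} (hx : x ∈ B) {k : ℕ} (hk : #{y ∈ B | y < x} = k)
    (hkr : k < r) : B.orderEmbOfFin hB ⟨k, hkr⟩ = x := by
  set f := B.orderEmbOfFin hB
  obtain ⟨u, rfl⟩ : x ∈ Set.range f := by rwa [Finset.range_orderEmbOfFin]
  have hfilter : ({y ∈ B | y < f u} : Finset α) = (Iio u).map f.toEmbedding := by
    ext y
    constructor
    · intro hy
      obtain ⟨hyB, hyu⟩ := Finset.mem_filter.1 hy
      obtain ⟨u', rfl⟩ : y ∈ Set.range f := by rwa [Finset.range_orderEmbOfFin]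
      exact mem_map_of_mem _ (Finset.mem_Iio.2 (f.lt_iff_lt.1 hyu))
    · intro hy
      obtain ⟨u', hu', rfl⟩ := mem_map.1 hy
      exact Finset.mem_filter.2
        ⟨B.orderEmbOfFin_mem hB u', f.lt_iff_lt.2 (Finset.mem_Iio.1 hu')⟩
  rw [hfilter, card_map, Fin.card_Iio] at hk
  subst hk
  rfl

theorem exists_finset_card_eq_of_le_encard {α : Type*} {S : Set α} {q : ℕ}
    (h : (q : ℕ∞) ≤ S.encard) : ∃ T : Finset α, ↑T ⊆ S ∧ #T = q := by
  obtain ⟨t, hts, htq⟩ := Set.exists_subset_encard_eq h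
  have ht := Set.finite_of_encard_eq_coe htq
  refine ⟨ht.toFinset, by simpa using hts, ?_⟩
  rw [ht.encard_eq_coe_toFinset_card] at htq
  exact_mod_cast htq

theorem le_encard_of_exists_finset {α : Type*} {S : Set α} {r : ℕ}
    (h : ∃ T : Finset α, r ≤ T.card ∧ ∀ x ∈ T, x ∈ S) : (r : ℕ∞) ≤ S.encard := by
  obtain ⟨T, hrT, hTS⟩ := h
  calc (r : ℕ∞) ≤ (T : Set α).encard := by simpa using hrT
    _ ≤ S.encard := Set.encard_le_encard hTS

theorem strictMonoOn_of_lex {ι κ β : Type*} [Preorder ι] [Preorder κ] [Preorder β]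
    {idx : ι → κ} {f : ι → β}
    (h : ∀ k k', k < k' → idx k < idx k' ∨ (idx k = idx k' ∧ f k < f k'))
    {s : Set ι} {i : κ} (hs : ∀ k ∈ s, idx k = i) : StrictMonoOn f s := by
  intro k hk k' hk' hkk'
  rcases h k k' hkk' with hlt | ⟨-, hf⟩
  · rw [hs k hk, hs k' hk'] at hlt
    exact absurd hlt (lt_irrefl i)
  · exact hf

section

variable {α ι : Type*} [LinearOrder α] [LinearOrder ι] {Y Y' : Set α} {r : ℕ}

theorem Finset.card_insert_union_of_lt_of_lt {L H : Finset α} {y : α}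
    (hL : ∀ x ∈ L, x < y) (hH : ∀ x ∈ H, y < x) : #(insert y (L ∪ H)) = #L + #H + 1 := by
  have hdisj : Disjoint L H :=
    Finset.disjoint_left.2 fun x hxL hxH => (hL x hxL).asymm (hH x hxH)
  have hy : y ∉ L ∪ H := by
    simp only [Finset.mem_union, not_or]
    exact ⟨fun h => (hL y h).false, fun h => (hH y h).false⟩
  rw [Finset.card_insert_of_notMem hy, Finset.card_union_of_disjoint hdisj]

theorem Finset.filter_insert_union_lt_of_le {L H : Finset α} {y z : α}
    (hH : ∀ x ∈ H, y < x) (hz : z ≤ y) :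
    {x ∈ insert y (L ∪ H) | x < z} = {x ∈ L | x < z} := by
  ext x
  simp only [Finset.mem_filter, Finset.mem_insert, Finset.mem_union]
  constructor
  · rintro ⟨rfl | hxL | hxH, hxz⟩
    · exact absurd hz hxz.not_ge
    · exact ⟨hxL, hxz⟩
    · exact absurd ((hH x hxH).trans hxz) hz.not_gt
  · rintro ⟨hxL, hxz⟩
    exact ⟨Or.inr (Or.inl hxL), hxz⟩

theorem exists_finset_realizing_ranks (hYY' : Y ⊆ Y')
    (hbetween : ∀ y₁ ∈ Y, ∀ y₂ ∈ Y, y₁ < y₂ → (r : ℕ∞) ≤ (Y' ∩ Ioo y₁ y₂).encard)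
    (hbelow : ∀ y ∈ Y, (r : ℕ∞) ≤ (Y' ∩ Iio y).encard)
    (s : Finset ι) {v : ι → α} (hv : StrictMonoOn v s) (hvY : ∀ k ∈ s, v k ∈ Y)
    {p : ι → ℕ} (hp : StrictMonoOn p s) {Z : Set α} (hZ : IsLowerSet Z)
    (hZr : (r : ℕ∞) ≤ (Y' ∩ Z).encard)
    (hZY : ∀ y ∈ Y ∩ Z, (r : ℕ∞) ≤ (Y' ∩ Z ∩ Ioi y).encard)
    {q : ℕ} (hqr : q ≤ r) (hvpq : ∀ k ∈ s, v k ∈ Z ∧ p k < q) :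
    ∃ B : Finset α, ↑B ⊆ Y' ∩ Z ∧ #B = q ∧
      ∀ k ∈ s, v k ∈ B ∧ #{x ∈ B | x < v k} = p k := by
  classical
  induction s using Finset.induction_on_max generalizing Z q with
  | empty =>
    obtain ⟨B, hBsub, hBcard⟩ :=
      exists_finset_card_eq_of_le_encard ((Nat.cast_le.2 hqr).trans hZr)
    exact ⟨B, hBsub, hBcard, by simp⟩
  | insert a s hsa ih =>
    have has : a ∈ insert a s := Finset.mem_insert_self a s
    have hsub : (s : Set ι) ⊆ ↑(insert a s) := Finset.coe_subset.2 (Finset.subset_insert a s)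
    obtain ⟨hvaZ, hpaq⟩ := hvpq a has
    have hs : ∀ k ∈ s, k ∈ insert a s := fun _ => Finset.mem_insert_of_mem
    have hlt : ∀ k ∈ s, v k < v a ∧ p k < p a := fun k hk =>
      ⟨hv (hs k hk) has (hsa k hk), hp (hs k hk) has (hsa k hk)⟩
    obtain ⟨L, hLsub, hLcard, hL⟩ := ih (hv.mono hsub) (fun k hk => hvY k (hs k hk)) (hp.mono hsub)
      (isLowerSet_Iio (v a)) (hbelow (v a) (hvY a has))
      (fun y hy => by
        rw [Set.inter_assoc, Set.Iio_inter_Ioi]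
        exact hbetween y hy.1 (v a) (hvY a has) hy.2)
      (hpaq.le.trans hqr) hlt
    obtain ⟨H, hHsub, hHcard⟩ := exists_finset_card_eq_of_le_encard (q := q - p a - 1)
      ((Nat.cast_le.2 (by omega)).trans (hZY (v a) ⟨hvY a has, hvaZ⟩))
    have hHa : ∀ x ∈ H, v a < x := fun x hx => (hHsub hx).2
    have hLa : ∀ x ∈ L, x < v a := fun x hx => (hLsub hx).2
    refine ⟨insert (v a) (L ∪ H), ?_, ?_, ?_⟩
    · intro x hx
      simp only [Finset.coe_insert, Finset.coe_union, Set.mem_insert_iff, Set.mem_union] at hx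
      rcases hx with rfl | hxL | hxH
      · exact ⟨hYY' (hvY a has), hvaZ⟩
      · exact ⟨(hLsub hxL).1, hZ (hLsub hxL).2.le hvaZ⟩
      · exact (hHsub hxH).1
    · rw [Finset.card_insert_union_of_lt_of_lt hLa hHa, hLcard, hHcard]
      omega
    · intro k hk
      rcases Finset.mem_insert.1 hk with rfl | hk
      · refine ⟨Finset.mem_insert_self _ _, ?_⟩
        rw [Finset.filter_insert_union_lt_of_le hHa le_rfl, Finset.filter_true_of_mem hLa, hLcard]
      · refine ⟨Finset.mem_insert_of_mem (Finset.mem_union_left _ (hL k hk).1), ?_⟩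
        rw [Finset.filter_insert_union_lt_of_le hHa (hlt k hk).1.le]
        exact (hL k hk).2

theorem exists_strictMono_fin_extension (hYY' : Y ⊆ Y')
    (hbetween : ∀ y₁ ∈ Y, ∀ y₂ ∈ Y, y₁ < y₂ → (r : ℕ∞) ≤ (Y' ∩ Ioo y₁ y₂).encard)
    (hbelow : ∀ y ∈ Y, (r : ℕ∞) ≤ (Y' ∩ Iio y).encard)
    (habove : ∀ y ∈ Y, (r : ℕ∞) ≤ (Y' ∩ Ioi y).encard) (hY'r : (r : ℕ∞) ≤ Y'.encard)
    (s : Finset ι) {v : ι → α} (hv : StrictMonoOn v s) (hvY : ∀ k ∈ s, v k ∈ Y)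
    {p : ι → Fin r} (hp : StrictMonoOn p s) :
    ∃ b : Fin r → α, StrictMono b ∧ (∀ u, b u ∈ Y') ∧ ∀ k ∈ s, b (p k) = v k := by
  obtain ⟨B, hBY', hBcard, hB⟩ := exists_finset_realizing_ranks hYY' hbetween hbelow s hv hvY
    (Fin.val_strictMono.comp_strictMonoOn hp) isLowerSet_univ (by rwa [Set.inter_univ])
    (fun y hy => by rw [Set.inter_univ]; exact habove y hy.1) le_rfl
    (fun k _ => ⟨trivial, (p k).isLt⟩)
  refine ⟨B.orderEmbOfFin hBcard, (B.orderEmbOfFin hBcard).strictMono,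
    fun u => (hBY' (B.orderEmbOfFin_mem hBcard u)).1, fun k hk => ?_⟩
  exact B.orderEmbOfFin_eq_of_card_filter_lt hBcard (hB k hk).1 (hB k hk).2 (p k).isLt

end

theorem stmt19_general (α : Type) [LinearOrder α] (s r n : ℕ)
    (X X' : Fin s → Set α)
    (hsub : ∀ i, X i ⊆ X' i)
    (hbetween : ∀ i, ∀ y1 ∈ X i, ∀ y2 ∈ X i, y1 < y2 →
      ∃ t : Finset α, r ≤ t.card ∧ ∀ x ∈ t, x ∈ X' i ∧ y1 < x ∧ x < y2)
    (hbelow : ∀ i, ∀ y ∈ X i, ∃ t : Finset α, r ≤ t.card ∧ ∀ x ∈ t, x ∈ X' i ∧ x < y)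
    (habove : ∀ i, ∀ y ∈ X i, ∃ t : Finset α, r ≤ t.card ∧ ∀ x ∈ t, x ∈ X' i ∧ y < x)
    (P : (Fin n → α) → Prop)
    (idx : Fin n → Fin s) (j l : Fin n → Fin r)
    (hjl : ∀ k k' : Fin n, k < k' →
      idx k < idx k' ∨ (idx k = idx k' ∧ j k < j k'))
    (hll : ∀ k k' : Fin n, k < k' →
      idx k < idx k' ∨ (idx k = idx k' ∧ l k < l k'))
    (hP : ∀ a : Fin s → Fin r → α,
      (∀ i, StrictMono (a i)) → (∀ i k, a i k ∈ X' i) →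
      P (fun k => a (idx k) (j k))) :
    ∀ a : Fin s → Fin r → α,
      (∀ i, StrictMono (a i)) → (∀ i k, a i k ∈ X i) →
      P (fun k => a (idx k) (l k)) := by
  intro a ha haX
  have hbelow' i y hy : (r : ℕ∞) ≤ (X' i ∩ Iio y).encard :=
    le_encard_of_exists_finset (hbelow i y hy)
  have hX'r i : (r : ℕ∞) ≤ (X' i).encard := by
    rcases r with _ | r
    · simp
    · exact (hbelow' i _ (haX i 0)).trans (Set.encard_le_encard Set.inter_subset_left)
  have hblock i : ∀ k ∈ ({k | idx k = i} : Finset (Fin n)), idx k = i := fun k hk => by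
    simpa using hk
  choose b hb hbX' hbal using fun i => exists_strictMono_fin_extension (hsub i)
    (fun y₁ h₁ y₂ h₂ h => le_encard_of_exists_finset (hbetween i y₁ h₁ y₂ h₂ h)) (hbelow' i)
    (fun y hy => le_encard_of_exists_finset (habove i y hy)) (hX'r i) _
    ((ha i).comp_strictMonoOn (strictMonoOn_of_lex hll (hblock i))) (fun k _ => haX i (l k))
    (strictMonoOn_of_lex hjl (hblock i))
  convert hP b hb hbX' using 2 with k
  exact (hbal (idx k) k (by simp)).symm

/-- The combinatorial lemma on equivalent index patterns.  Let `X i ⊆ X' i` be subsets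
of a linear order arranged in increasing blocks, such that between any two elements of
`X i`, below any element of `X i`, and above any element of `X i` there are at least `r`
elements of `X' i` (the condition `X i ∈ (X' i)^{••}`).  If a property `P` holds of all
tuples extracted at index positions `(i_1,j_1),…,(i_n,j_n)` from all tuples of strictly
increasing `r`-tuples through `X'_1 × … × X'_s`, then for any equivalent index pattern
`(i_1,l_1),…,(i_n,l_n)` (same first coordinates), `P` holds of all tuples extracted at
the new positions from tuples of strictly increasing `r`-tuples through
`X_1 × … × X_s`. -/
theorem stmt19 (α : Type) [LinearOrder α] (s r n : ℕ)
    (X X' : Fin s → Set α)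
    (hsub : ∀ i, X i ⊆ X' i)
    (hblocks : ∀ i i' : Fin s, i < i' → ∀ x ∈ X' i, ∀ y ∈ X' i', x < y)
    (hbetween : ∀ i, ∀ y1 ∈ X i, ∀ y2 ∈ X i, y1 < y2 →
      ∃ t : Finset α, r ≤ t.card ∧ ∀ x ∈ t, x ∈ X' i ∧ y1 < x ∧ x < y2)
    (hbelow : ∀ i, ∀ y ∈ X i, ∃ t : Finset α, r ≤ t.card ∧ ∀ x ∈ t, x ∈ X' i ∧ x < y)
    (habove : ∀ i, ∀ y ∈ X i, ∃ t : Finset α, r ≤ t.card ∧ ∀ x ∈ t, x ∈ X' i ∧ y < x)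
    (P : (Fin n → α) → Prop)
    (idx : Fin n → Fin s) (j l : Fin n → Fin r)
    (hjl : ∀ k k' : Fin n, k < k' →
      idx k < idx k' ∨ (idx k = idx k' ∧ j k < j k'))
    (hll : ∀ k k' : Fin n, k < k' →
      idx k < idx k' ∨ (idx k = idx k' ∧ l k < l k'))
    (hP : ∀ a : Fin s → Fin r → α,
      (∀ i, StrictMono (a i)) → (∀ i k, a i k ∈ X' i) →
      P (fun k => a (idx k) (j k))) :
    ∀ a : Fin s → Fin r → α,
      (∀ i, StrictMono (a i)) → (∀ i k, a i k ∈ X i) →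
      P (fun k => a (idx k) (l k)) :=
  stmt19_general α s r n X X' hsub hbetween hbelow habove P idx j l hjl hll hP
end
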